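/- arXiv:2006.10138 — 3 statements merged into one kernel-verified Lean document; each statement's English description precedes it below -/
import Mathlib

section
/- (Lemma 1.) Let E be a real Hilbert space, n ≥ 1 an integer, λ > 0, μ > 0, and let ℓ_1, …, ℓ_n : E → ℝ be differentiable. For p in the probability simplex Δ_n define the weighted loss F_p(w) = Σ_{i=1}^n p_i ℓ_i(w), and define F_dro(w) = λ log((1/n) Σ_{i=1}^n exp(ℓ_i(w)/λ)). Assume that for every p ∈ Δ_n the function F_p is bounded below and satisfies the μ-PL condition, i.e. 2μ(F_p(w) − inf_{w'} F_p(w')) ≤ ‖∇F_p(w)‖² for all w ∈ E. Then F_dro is bounded below and satisfies the μ-PL condition: 2μ(F_dro(w) − inf_{w'} F_dro(w')) ≤ ‖∇F_dro(w)‖² for all w ∈ E. -/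
/-!
By the Gibbs variational principle, `λ log Σᵢ qᵢ exp (xᵢ / λ) = maxₚ (Σᵢ pᵢ xᵢ - λ KL(p ‖ q))`
over probability vectors `p`, the maximum being attained at the Gibbs weights `p ∝ q exp (x / λ)`.
So for each `w`, the weighted loss `F_p` for the Gibbs weights `p` of `ℓ(w)`, shifted down by
`λ KL(p ‖ q)`, is a minorant of `F_dro` touching it at `w`. A differentiable minorant touching at `w`
has the same gradient there and, up to the shift, an infimum no larger, so the PL inequality of
`F_p` at `w` gives that of `F_dro`.
-/

open Finset Real

section PL

variable {E : Type*} [NormedAddCommGroup E] [InnerProductSpace ℝ E] [CompleteSpace E]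

def SatisfiesPL (μ : ℝ) (f : E → ℝ) : Prop :=
  BddBelow (Set.range f) ∧ ∀ w, 2 * μ * (f w - ⨅ v, f v) ≤ ‖gradient f w‖ ^ 2

variable {F G : E → ℝ} {c : ℝ} {w : E}

theorem gradient_eq_of_sub_const_le_of_eq (hle : ∀ v, G v - c ≤ F v) (heq : F w = G w - c)
    (hF : DifferentiableAt ℝ F w) (hG : DifferentiableAt ℝ G w) :
    gradient F w = gradient G w := by
  have hmin : IsLocalMin (fun v => F v - (G v - c)) w :=
    Filter.Eventually.of_forall fun v => by simpa [heq] using hle v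
  have hzero := hmin.fderiv_eq_zero
  rw [fderiv_fun_sub hF (hG.sub_const c), fderiv_sub_const, sub_eq_zero] at hzero
  simp only [gradient, hzero]

theorem SatisfiesPL.of_touching_minorants {μ : ℝ} (hμ : 0 ≤ μ) (G : E → E → ℝ) (c : E → ℝ)
    (hG : ∀ w, SatisfiesPL μ (G w)) (hle : ∀ w v, G w v - c w ≤ F v)
    (heq : ∀ w, F w = G w w - c w) (hF : Differentiable ℝ F)
    (hGd : ∀ w, DifferentiableAt ℝ (G w) w) : SatisfiesPL μ F := by
  refine ⟨?_, fun w => ?_⟩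
  · obtain ⟨m, hm⟩ := (hG 0).1
    exact ⟨m - c 0, Set.forall_mem_range.2 fun v =>
      (sub_le_sub_right (hm ⟨v, rfl⟩) _).trans (hle 0 v)⟩
  · have hinf : (⨅ v, G w v) - c w ≤ ⨅ v, F v :=
      le_ciInf fun v => (sub_le_sub_right (ciInf_le (hG w).1 v) _).trans (hle w v)
    rw [gradient_eq_of_sub_const_le_of_eq (hle w) (heq w) (hF w) (hGd w)]
    calc 2 * μ * (F w - ⨅ v, F v) ≤ 2 * μ * (G w w - ⨅ v, G w v) := by
          gcongr 2 * μ * ?_; linarith [heq w]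
      _ ≤ _ := (hG w).2 w

end PL

section Gibbs

variable {ι : Type*} [Fintype ι]

noncomputable def logSumExp (lam : ℝ) (q x : ι → ℝ) : ℝ :=
  lam * log (∑ i, q i * exp (x i / lam))

noncomputable def gibbs (lam : ℝ) (q x : ι → ℝ) (i : ι) : ℝ :=
  q i * exp (x i / lam) / ∑ j, q j * exp (x j / lam)

noncomputable def relEntropy (p q : ι → ℝ) : ℝ :=
  ∑ i, p i * log (p i / q i)

variable {lam : ℝ} {p q x : ι → ℝ}

theorem sum_mul_exp_pos [Nonempty ι] (hq : ∀ i, 0 < q i) : 0 < ∑ i, q i * exp (x i / lam) :=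
  sum_pos (fun i _ => mul_pos (hq i) (exp_pos _)) univ_nonempty

theorem gibbs_pos [Nonempty ι] (hq : ∀ i, 0 < q i) (i : ι) : 0 < gibbs lam q x i :=
  div_pos (mul_pos (hq i) (exp_pos _)) (sum_mul_exp_pos hq)

theorem sum_gibbs [Nonempty ι] (hq : ∀ i, 0 < q i) : ∑ i, gibbs lam q x i = 1 := by
  simp only [gibbs, ← sum_div, div_self (sum_mul_exp_pos hq).ne']

theorem sum_mul_sub_relEntropy_le_logSumExp (hlam : 0 < lam) (hp : ∀ i, 0 < p i)
    (hp1 : ∑ i, p i = 1) (hq : ∀ i, 0 < q i) :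
    ∑ i, p i * x i - lam * relEntropy p q ≤ logSumExp lam q x := by
  set y : ι → ℝ := fun i => q i * exp (x i / lam) / p i
  have hy : ∀ i, 0 < y i := fun i => div_pos (mul_pos (hq i) (exp_pos _)) (hp i)
  have hlog : ∀ i, log (y i) = x i / lam - log (p i / q i) := fun i => by
    simp only [y]
    rw [log_div (mul_pos (hq i) (exp_pos _)).ne' (hp i).ne', log_mul (hq i).ne' (exp_pos _).ne',
      log_exp, log_div (hp i).ne' (hq i).ne']
    ring
  have hmean : ∑ i, p i * y i = ∑ i, q i * exp (x i / lam) :=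
    sum_congr rfl fun i _ => mul_div_cancel₀ _ (hp i).ne'
  have jensen : ∑ i, p i * log (y i) ≤ log (∑ i, p i * y i) := by
    simpa only [smul_eq_mul] using strictConcaveOn_log_Ioi.concaveOn.le_map_sum
      (t := univ) (fun i _ => (hp i).le) hp1 (fun i _ => hy i)
  calc ∑ i, p i * x i - lam * relEntropy p q = lam * ∑ i, p i * log (y i) := by
        rw [relEntropy, mul_sum, mul_sum, ← sum_sub_distrib]
        refine sum_congr rfl fun i _ => ?_
        rw [hlog]
        field_simp
    _ ≤ logSumExp lam q x := by
        rw [logSumExp, ← hmean]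
        gcongr

theorem sum_gibbs_mul_sub_relEntropy_gibbs [Nonempty ι] (hlam : lam ≠ 0) (hq : ∀ i, 0 < q i) :
    ∑ i, gibbs lam q x i * x i - lam * relEntropy (gibbs lam q x) q = logSumExp lam q x := by
  set Z := ∑ i, q i * exp (x i / lam) with hZ
  have hlog : ∀ i, log (gibbs lam q x i / q i) = x i / lam - log Z := fun i => by
    have hratio : gibbs lam q x i / q i = exp (x i / lam) / Z := by
      rw [gibbs, ← hZ]
      field_simp [(hq i).ne']
    rw [hratio, log_div (exp_pos _).ne' (sum_mul_exp_pos hq).ne', log_exp]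
  calc ∑ i, gibbs lam q x i * x i - lam * relEntropy (gibbs lam q x) q
      = lam * log Z * ∑ i, gibbs lam q x i := by
        rw [relEntropy, mul_sum, mul_sum, ← sum_sub_distrib]
        refine sum_congr rfl fun i _ => ?_
        rw [hlog]
        field_simp
        ring
    _ = logSumExp lam q x := by rw [sum_gibbs hq, mul_one, logSumExp]

end Gibbs

theorem satisfiesPL_logSumExp {E ι : Type*} [NormedAddCommGroup E] [InnerProductSpace ℝ E]
    [CompleteSpace E] [Fintype ι] [Nonempty ι] {q : ι → ℝ} (hq : ∀ i, 0 < q i) {lam μ : ℝ}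
    (hlam : 0 < lam) (hμ : 0 ≤ μ) {ℓ : ι → E → ℝ} (hℓ : ∀ i, Differentiable ℝ (ℓ i))
    (hPL : ∀ p : ι → ℝ, (∀ i, 0 ≤ p i) → ∑ i, p i = 1 →
      SatisfiesPL μ fun w => ∑ i, p i * ℓ i w) :
    SatisfiesPL μ fun w => logSumExp lam q fun i => ℓ i w := by
  set p : E → ι → ℝ := fun w => gibbs lam q fun i => ℓ i w
  refine SatisfiesPL.of_touching_minorants hμ (fun w v => ∑ i, p w i * ℓ i v)
    (fun w => lam * relEntropy (p w) q)
    (fun _ => hPL _ (fun i => (gibbs_pos hq i).le) (sum_gibbs hq))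
    (fun _ _ => sum_mul_sub_relEntropy_le_logSumExp hlam (gibbs_pos hq) (sum_gibbs hq) hq)
    (fun _ => (sum_gibbs_mul_sub_relEntropy_gibbs hlam.ne' hq).symm)
    ?_ (fun _ => by fun_prop)
  exact (Differentiable.log (by fun_prop) fun w => (sum_mul_exp_pos hq).ne').const_mul lam

/-- Lemma 1: if for every `p` in the probability simplex the weighted loss
`F_p(w) = Σ_i p_i ℓ_i(w)` is bounded below and satisfies the `μ`-PL condition,
then the DRO objective `F_dro(w) = λ log((1/n) Σ_i exp(ℓ_i(w)/λ))` is bounded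
below and satisfies the `μ`-PL condition. -/
theorem dro_PL_of_weighted_PL (E : Type*) [NormedAddCommGroup E]
    [InnerProductSpace ℝ E] [CompleteSpace E]
    (n : ℕ) (hn : 1 ≤ n) (lam μ : ℝ) (hlam : 0 < lam) (hμ : 0 < μ)
    (ℓ : Fin n → E → ℝ) (hdiff : ∀ i, Differentiable ℝ (ℓ i))
    (hPL : ∀ p : Fin n → ℝ, (∀ i, 0 ≤ p i) → ∑ i, p i = 1 →
      BddBelow (Set.range fun w : E => ∑ i, p i * ℓ i w) ∧
      ∀ w : E, 2 * μ * ((∑ i, p i * ℓ i w) - ⨅ w' : E, ∑ i, p i * ℓ i w')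
        ≤ ‖gradient (fun w : E => ∑ i, p i * ℓ i w) w‖ ^ 2) :
    BddBelow (Set.range fun w : E =>
        lam * Real.log ((1 / n) * ∑ i, Real.exp (ℓ i w / lam))) ∧
    ∀ w : E,
      2 * μ * ((lam * Real.log ((1 / n) * ∑ i, Real.exp (ℓ i w / lam))) -
          ⨅ w' : E, lam * Real.log ((1 / n) * ∑ i, Real.exp (ℓ i w' / lam)))
        ≤ ‖gradient (fun w : E =>
            lam * Real.log ((1 / n) * ∑ i, Real.exp (ℓ i w / lam))) w‖ ^ 2 := by
  have : Nonempty (Fin n) := ⟨⟨0, hn⟩⟩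
  simp only [mul_sum]
  exact satisfiesPL_logSumExp (q := fun _ => 1 / n) (fun _ => by positivity) hlam hμ.le hdiff hPL
end

section
/- (Deterministic form of Lemma 6, intermediate inequality.) Let E be a real Hilbert space, φ : E → ℝ differentiable with ∇φ Lipschitz with constant L ≥ 0, r : E → ℝ convex, η > 0, and w, d ∈ E. Suppose w⁺ is a proximal point of w − ηd for step size η and regularizer r, i.e. w⁺ minimizes u ↦ (1/(2η))‖u − (w − ηd)‖² + r(u) over E. Then φ(w⁺) + r(w⁺) ≤ φ(w) + r(w) + (η/2)‖∇φ(w) − d‖² − (1/(2η) − L/2)‖w⁺ − w‖². -/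
/-!
The descent lemma bounds `φ w⁺` by the linearisation of `φ` at `w` plus `(L/2)‖w⁺ - w‖²`.
Comparing `w⁺` with the points of the segment towards `w` and using convexity of `r` gives the
optimality condition of the proximal step, `r w⁺ + ⟪d, w⁺ - w⟫ + ‖w⁺ - w‖² / η ≤ r w`.
Adding the two leaves the error term `⟪∇φ w - d, w⁺ - w⟫`, which Young's inequality splits into
`(η/2)‖∇φ w - d‖² + ‖w⁺ - w‖² / (2η)`.
-/

open Set Filter Topology InnerProductSpace

lemma le_of_forall_mem_Ioc_le_add_mul {a b c : ℝ} (h : ∀ t ∈ Ioc (0 : ℝ) 1, a ≤ b + t * c) :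
    a ≤ b := by
  have hlim : Tendsto (fun t : ℝ => b + t * c) (𝓝[>] 0) (𝓝 b) := by
    simpa using ((by fun_prop : Continuous fun t : ℝ => b + t * c).tendsto 0).mono_left
      nhdsWithin_le_nhds
  exact ge_of_tendsto hlim (by filter_upwards [Ioc_mem_nhdsGT zero_lt_one] with t ht using h t ht)

lemma le_add_deriv_add_half_of_deriv_le {f f' : ℝ → ℝ} {K : ℝ}
    (hf : ∀ t, HasDerivAt f (f' t) t) (hf' : ∀ t ∈ Ioo (0 : ℝ) 1, f' t ≤ f' 0 + K * t) :
    f 1 ≤ f 0 + f' 0 + K / 2 := by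
  set g : ℝ → ℝ := fun t => f t - t * f' 0 - K / 2 * t ^ 2
  have hg : ∀ t, HasDerivAt g (f' t - f' 0 - K * t) t := fun t => by
    have h := ((hf t).sub ((hasDerivAt_id' t).mul_const (f' 0))).sub
      ((hasDerivAt_pow 2 t).const_mul (K / 2))
    exact h.congr_deriv (by norm_num; ring)
  have hanti : AntitoneOn g (Icc 0 1) := by
    refine antitoneOn_of_hasDerivWithinAt_nonpos (convex_Icc 0 1)
      (HasDerivAt.continuousOn fun t _ => hg t) (fun t _ => (hg t).hasDerivWithinAt) ?_
    intro t ht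
    rw [interior_Icc] at ht
    linarith [hf' t ht]
  have h01 := hanti (left_mem_Icc.2 zero_le_one) (right_mem_Icc.2 zero_le_one) zero_le_one
  simp only [g] at h01
  linarith

section InnerProductSpace

variable {E : Type*} [NormedAddCommGroup E] [InnerProductSpace ℝ E]

lemma Differentiable.hasDerivAt_comp_add_smul [CompleteSpace E] {φ : E → ℝ}
    (hφ : Differentiable ℝ φ) (w v : E) (t : ℝ) :
    HasDerivAt (fun s : ℝ => φ (w + s • v)) ⟪gradient φ (w + t • v), v⟫_ℝ t := by
  have hline : HasDerivAt (fun s : ℝ => w + s • v) v t := by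
    simpa using ((hasDerivAt_id t).smul_const v).const_add w
  simpa [Function.comp_def] using
    (hφ _).hasGradientAt.hasFDerivAt.comp_hasDerivAt t hline

theorem Differentiable.le_add_inner_gradient_add_sq [CompleteSpace E] {φ : E → ℝ} {L : ℝ}
    (hφ : Differentiable ℝ φ) (hLip : ∀ x y : E, ‖gradient φ x - gradient φ y‖ ≤ L * ‖x - y‖)
    (w y : E) :
    φ y ≤ φ w + ⟪gradient φ w, y - w⟫_ℝ + L / 2 * ‖y - w‖ ^ 2 := by
  have h := le_add_deriv_add_half_of_deriv_le (K := L * ‖y - w‖ ^ 2)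
    (hφ.hasDerivAt_comp_add_smul w (y - w)) fun t ht => by
      have hdist : ‖w + t • (y - w) - w‖ = t * ‖y - w‖ := by
        simp [norm_smul, abs_of_pos ht.1]
      calc ⟪gradient φ (w + t • (y - w)), y - w⟫_ℝ
          = ⟪gradient φ w, y - w⟫_ℝ + ⟪gradient φ (w + t • (y - w)) - gradient φ w, y - w⟫_ℝ := by
            rw [inner_sub_left]; ring
        _ ≤ ⟪gradient φ w, y - w⟫_ℝ + L * ‖w + t • (y - w) - w‖ * ‖y - w‖ := by
            gcongr
            exact (real_inner_le_norm _ _).trans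
              (mul_le_mul_of_nonneg_right (hLip _ _) (norm_nonneg _))
        _ = ⟪gradient φ (w + (0 : ℝ) • (y - w)), y - w⟫_ℝ + L * ‖y - w‖ ^ 2 * t := by
            rw [hdist, zero_smul, add_zero]; ring
  simp only [one_smul, zero_smul, add_zero, add_sub_cancel] at h
  linarith

lemma two_mul_real_inner_le_mul_sq_add_inv_mul_sq {ε : ℝ} (hε : 0 < ε) (x y : E) :
    2 * ⟪x, y⟫_ℝ ≤ ε * ‖x‖ ^ 2 + ε⁻¹ * ‖y‖ ^ 2 :=
  calc 2 * ⟪x, y⟫_ℝ ≤ 2 * ‖x‖ * ‖y‖ := by linarith [real_inner_le_norm x y]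
    _ ≤ ε * ‖x‖ ^ 2 + ε⁻¹ * ‖y‖ ^ 2 := two_mul_le_add_mul_sq hε

def IsProxPoint (η : ℝ) (r : E → ℝ) (v p : E) : Prop :=
  ∀ u : E, (1 / (2 * η)) * ‖p - v‖ ^ 2 + r p ≤ (1 / (2 * η)) * ‖u - v‖ ^ 2 + r u

/-- The optimality condition of the proximal step: `η⁻¹ (v - p)` is a subgradient of `r` at `p`. -/
theorem IsProxPoint.add_inv_mul_inner_le {η : ℝ} {r : E → ℝ} {v p : E}
    (hp : IsProxPoint η r v p) (hr : ConvexOn ℝ univ r) (hη : 0 < η) (u : E) :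
    r p + η⁻¹ * ⟪v - p, u - p⟫_ℝ ≤ r u := by
  refine le_of_forall_mem_Ioc_le_add_mul (c := ‖u - p‖ ^ 2 / (2 * η)) fun t ht => ?_
  have hconv : r (p + t • (u - p)) ≤ r p + t * (r u - r p) := by
    have h := hr.2 (mem_univ p) (mem_univ u) (sub_nonneg.2 ht.2) ht.1.le (sub_add_cancel 1 t)
    rw [show (1 - t) • p + t • u = p + t • (u - p) by module] at h
    simpa [smul_eq_mul] using h.trans_eq (by ring)
  have hexpand : ‖p + t • (u - p) - v‖ ^ 2
      = ‖p - v‖ ^ 2 - 2 * t * ⟪v - p, u - p⟫_ℝ + t ^ 2 * ‖u - p‖ ^ 2 := by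
    rw [show p + t • (u - p) - v = (p - v) + t • (u - p) by abel, norm_add_sq_real,
      real_inner_smul_right, norm_smul, mul_pow, Real.norm_eq_abs, sq_abs,
      ← neg_sub v p, inner_neg_left]
    ring
  have hmin := hp (p + t • (u - p))
  rw [hexpand] at hmin
  have key : t * (r p + η⁻¹ * ⟪v - p, u - p⟫_ℝ) ≤ t * (r u + t * (‖u - p‖ ^ 2 / (2 * η))) := by
    have : (1 / (2 * η)) * (2 * t * ⟪v - p, u - p⟫_ℝ - t ^ 2 * ‖u - p‖ ^ 2)
        ≤ t * (r u - r p) := by linarith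
    field_simp at this ⊢
    linarith
  exact le_of_mul_le_mul_left key ht.1

end InnerProductSpace

theorem prox_step_descent_general (E : Type*) [NormedAddCommGroup E]
    [InnerProductSpace ℝ E] [CompleteSpace E]
    (φ : E → ℝ) (L : ℝ) (hφ : Differentiable ℝ φ)
    (hLip : ∀ x y : E, ‖gradient φ x - gradient φ y‖ ≤ L * ‖x - y‖)
    (r : E → ℝ) (hr : ConvexOn ℝ Set.univ r) (η : ℝ) (hη : 0 < η)
    (w d wplus : E)
    (hmin : ∀ u : E,
      (1 / (2 * η)) * ‖wplus - (w - η • d)‖ ^ 2 + r wplus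
        ≤ (1 / (2 * η)) * ‖u - (w - η • d)‖ ^ 2 + r u) :
    φ wplus + r wplus
      ≤ φ w + r w + (η / 2) * ‖gradient φ w - d‖ ^ 2
        - (1 / (2 * η) - L / 2) * ‖wplus - w‖ ^ 2 := by
  have hdesc := hφ.le_add_inner_gradient_add_sq hLip w wplus
  have hprox := IsProxPoint.add_inv_mul_inner_le (v := w - η • d) hmin hr hη w
  have hinner : ⟪w - η • d - wplus, w - wplus⟫_ℝ = ‖wplus - w‖ ^ 2 + η * ⟪d, wplus - w⟫_ℝ := by
    rw [show w - η • d - wplus = -((wplus - w) + η • d) by abel,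
      show w - wplus = -(wplus - w) by abel, inner_neg_neg, inner_add_left, real_inner_smul_left, real_inner_self_eq_norm_sq]
  have hyoung := two_mul_real_inner_le_mul_sq_add_inv_mul_sq hη (gradient φ w - d) (wplus - w)
  rw [inner_sub_left] at hyoung
  rw [hinner, mul_add, ← mul_assoc, inv_mul_cancel₀ hη.ne', one_mul] at hprox
  linear_combination hdesc + hprox + hyoung / 2

/-- Deterministic form of Lemma 6 (intermediate inequality): one proximal step
from `w` along an approximate gradient `d` decreases the composite objective
`φ + r` up to the gradient-estimation error `‖∇φ(w) − d‖²`. -/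
theorem prox_step_descent (E : Type*) [NormedAddCommGroup E]
    [InnerProductSpace ℝ E] [CompleteSpace E]
    (φ : E → ℝ) (L : ℝ) (hL : 0 ≤ L) (hφ : Differentiable ℝ φ)
    (hLip : ∀ x y : E, ‖gradient φ x - gradient φ y‖ ≤ L * ‖x - y‖)
    (r : E → ℝ) (hr : ConvexOn ℝ Set.univ r) (η : ℝ) (hη : 0 < η)
    (w d wplus : E)
    (hmin : ∀ u : E,
      (1 / (2 * η)) * ‖wplus - (w - η • d)‖ ^ 2 + r wplus
        ≤ (1 / (2 * η)) * ‖u - (w - η • d)‖ ^ 2 + r u) :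
    φ wplus + r wplus
      ≤ φ w + r w + (η / 2) * ‖gradient φ w - d‖ ^ 2
        - (1 / (2 * η) - L / 2) * ‖wplus - w‖ ^ 2 :=
  prox_step_descent_general E φ L hφ hLip r hr η hη w d wplus hmin
end

section
/- (Single-step variance recursion, the core estimate of Lemma 7.) Let (Ω, 𝒜, P) be a probability space and H a real Hilbert space. Let X, Y : Ω → H be strongly measurable with ∫‖X‖² dP < ∞ and ∫‖Y‖² dP < ∞, and set ḡ' := ∫ X dP and ḡ := ∫ Y dP. Let u ∈ H, a ∈ [0,1], and σ, C, D ≥ 0 be such that ∫‖X − ḡ'‖² dP ≤ σ² and ∫‖X − Y‖² dP ≤ C² D². Then ∫‖X + (1−a)(u − Y) − ḡ'‖² dP ≤ 2a²σ² + (1−a)²‖u − ḡ‖² + 2(1−a)² C² D². -/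
open MeasureTheory

/-!
The update minus `∫X` splits as `c + f` with the deterministic part `c = (1-a)•(u - ∫Y)` and the
centred fluctuation `f = a•(X - ∫X) + (1-a)•(V - ∫V)`, `V = X - Y`. As `∫f = 0` the cross term
vanishes and the second moment is `‖c‖² + ∫‖f‖²`. The bound `‖x + y‖² ≤ 2‖x‖² + 2‖y‖²` then
controls `∫‖f‖²` by the variances of `X` and of `V`, and the variance of `V` is at most its second
moment `∫‖X - Y‖²`.
-/

lemma norm_add_sq_le_two_mul {E : Type*} [SeminormedAddCommGroup E] (x y : E) :
    ‖x + y‖ ^ 2 ≤ 2 * (‖x‖ ^ 2 + ‖y‖ ^ 2) :=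
  (pow_le_pow_left₀ (norm_nonneg _) (norm_add_le x y) 2).trans add_sq_le

lemma norm_smul_add_smul_sq_le {E : Type*} [SeminormedAddCommGroup E] [NormedSpace ℝ E]
    (a b : ℝ) (x y : E) :
    ‖a • x + b • y‖ ^ 2 ≤ 2 * a ^ 2 * ‖x‖ ^ 2 + 2 * b ^ 2 * ‖y‖ ^ 2 := by
  have h := norm_add_sq_le_two_mul (a • x) (b • y)
  simp only [norm_smul, mul_pow, Real.norm_eq_abs, sq_abs] at h
  linarith

section SecondMoment

variable {Ω : Type*} [MeasurableSpace Ω] {P : Measure Ω}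

lemma MeasureTheory.MemLp.integrable_norm_sq {E : Type*} [NormedAddCommGroup E] {f : Ω → E}
    (hf : MemLp f 2 P) : Integrable (fun ω => ‖f ω‖ ^ 2) P :=
  (memLp_two_iff_integrable_sq_norm hf.aestronglyMeasurable).mp hf

lemma integral_norm_smul_add_smul_sq_le {E : Type*} [NormedAddCommGroup E] [NormedSpace ℝ E]
    {f g : Ω → E} (hf : MemLp f 2 P) (hg : MemLp g 2 P) (a b : ℝ) :
    ∫ ω, ‖a • f ω + b • g ω‖ ^ 2 ∂P
      ≤ 2 * a ^ 2 * ∫ ω, ‖f ω‖ ^ 2 ∂P + 2 * b ^ 2 * ∫ ω, ‖g ω‖ ^ 2 ∂P := by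
  have hf2 := hf.integrable_norm_sq.const_mul (2 * a ^ 2)
  have hg2 := hg.integrable_norm_sq.const_mul (2 * b ^ 2)
  rw [← integral_const_mul, ← integral_const_mul, ← integral_add hf2 hg2]
  exact integral_mono ((hf.const_smul a).add (hg.const_smul b)).integrable_norm_sq
    (hf2.add hg2) fun ω => norm_smul_add_smul_sq_le a b (f ω) (g ω)

variable [IsProbabilityMeasure P]

lemma integral_sub_integral_eq_zero {E : Type*} [NormedAddCommGroup E] [NormedSpace ℝ E]
    [CompleteSpace E] {f : Ω → E} (hf : Integrable f P) :
    ∫ ω, (f ω - ∫ ω', f ω' ∂P) ∂P = 0 := by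
  rw [integral_sub hf (integrable_const _), integral_const, probReal_univ, one_smul, sub_self]

variable {H : Type*} [NormedAddCommGroup H] [InnerProductSpace ℝ H] [CompleteSpace H]

lemma integral_norm_const_add_sq {f : Ω → H} (hf : MemLp f 2 P) (c : H) :
    ∫ ω, ‖c + f ω‖ ^ 2 ∂P
      = ‖c‖ ^ 2 + 2 * inner ℝ c (∫ ω, f ω ∂P) + ∫ ω, ‖f ω‖ ^ 2 ∂P := by
  have hfi : Integrable f P := hf.integrable one_le_two
  have hinner : Integrable (fun ω => 2 * inner ℝ c (f ω)) P := (hfi.const_inner c).const_mul 2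
  simp_rw [norm_add_sq_real c]
  rw [integral_add, integral_add, integral_const, integral_const_mul, integral_inner hfi,
    probReal_univ, one_smul]
  · exact integrable_const _
  · exact hinner
  · exact (integrable_const _).add hinner
  · exact hf.integrable_norm_sq

lemma integral_norm_sub_integral_sq {f : Ω → H} (hf : MemLp f 2 P) :
    ∫ ω, ‖f ω - ∫ ω', f ω' ∂P‖ ^ 2 ∂P = ∫ ω, ‖f ω‖ ^ 2 ∂P - ‖∫ ω, f ω ∂P‖ ^ 2 := by
  simp_rw [sub_eq_neg_add _ (∫ ω', f ω' ∂P)]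
  rw [integral_norm_const_add_sq hf, inner_neg_left, real_inner_self_eq_norm_sq, norm_neg]
  ring

lemma integral_norm_sub_integral_sq_le {f : Ω → H} (hf : MemLp f 2 P) :
    ∫ ω, ‖f ω - ∫ ω', f ω' ∂P‖ ^ 2 ∂P ≤ ∫ ω, ‖f ω‖ ^ 2 ∂P := by
  rw [integral_norm_sub_integral_sq hf]
  exact sub_le_self _ (sq_nonneg _)

end SecondMoment

theorem storm_variance_recursion_general (Ω : Type*) [MeasurableSpace Ω]
    (P : Measure Ω) [IsProbabilityMeasure P]
    (H : Type*) [NormedAddCommGroup H] [InnerProductSpace ℝ H] [CompleteSpace H]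
    (X Y : Ω → H)
    (hX : AEStronglyMeasurable X P) (hY : AEStronglyMeasurable Y P)
    (hX2 : Integrable (fun ω => ‖X ω‖ ^ 2) P)
    (hY2 : Integrable (fun ω => ‖Y ω‖ ^ 2) P)
    (u : H) (a σ C D : ℝ)
    (hvar : ∫ ω, ‖X ω - ∫ ω', X ω' ∂P‖ ^ 2 ∂P ≤ σ ^ 2)
    (hXY : ∫ ω, ‖X ω - Y ω‖ ^ 2 ∂P ≤ C ^ 2 * D ^ 2) :
    ∫ ω, ‖X ω + (1 - a) • (u - Y ω) - ∫ ω', X ω' ∂P‖ ^ 2 ∂P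
      ≤ 2 * a ^ 2 * σ ^ 2 + (1 - a) ^ 2 * ‖u - ∫ ω', Y ω' ∂P‖ ^ 2
        + 2 * (1 - a) ^ 2 * C ^ 2 * D ^ 2 := by
  have hXm : MemLp X 2 P := (memLp_two_iff_integrable_sq_norm hX).mpr hX2
  have hYm : MemLp Y 2 P := (memLp_two_iff_integrable_sq_norm hY).mpr hY2
  have hXc : MemLp (fun ω => X ω - ∫ ω', X ω' ∂P) 2 P := hXm.sub (memLp_const _)
  have hVc : MemLp (fun ω => X ω - Y ω - ∫ ω', (X ω' - Y ω') ∂P) 2 P :=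
    (hXm.sub hYm).sub (memLp_const _)
  let f := fun ω => a • (X ω - ∫ ω', X ω' ∂P) + (1 - a) • (X ω - Y ω - ∫ ω', (X ω' - Y ω') ∂P)
  have hf : MemLp f 2 P := (hXc.const_smul a).add (hVc.const_smul _)
  have hf_mean : ∫ ω, f ω ∂P = 0 := by
    rw [integral_add, integral_smul, integral_smul,
      integral_sub_integral_eq_zero (hXm.integrable one_le_two),
      integral_sub_integral_eq_zero (f := fun ω => X ω - Y ω) ((hXm.sub hYm).integrable one_le_two),
      smul_zero, smul_zero, add_zero]
    · exact (hXc.integrable one_le_two).smul a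
    · exact (hVc.integrable one_le_two).smul _
  have hsplit : ∀ ω, X ω + (1 - a) • (u - Y ω) - ∫ ω', X ω' ∂P
      = (1 - a) • (u - ∫ ω', Y ω' ∂P) + f ω := fun ω => by
    simp only [f, integral_sub (hXm.integrable one_le_two) (hYm.integrable one_le_two)]
    module
  have hf_sq : ∫ ω, ‖f ω‖ ^ 2 ∂P ≤ 2 * a ^ 2 * σ ^ 2 + 2 * (1 - a) ^ 2 * (C ^ 2 * D ^ 2) :=
    (integral_norm_smul_add_smul_sq_le hXc hVc a (1 - a)).trans <| by
      gcongr
      exact (integral_norm_sub_integral_sq_le (hXm.sub hYm)).trans hXY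
  simp_rw [hsplit]
  rw [integral_norm_const_add_sq hf, hf_mean, inner_zero_right, norm_smul, mul_pow,
    Real.norm_eq_abs, sq_abs]
  linarith

/-- Single-step variance recursion (core estimate of Lemma 7): the STORM-type
update `X + (1−a)(u − Y)` has second moment about `∫X` bounded by
`2a²σ² + (1−a)²‖u − ∫Y‖² + 2(1−a)²C²D²`. -/
theorem storm_variance_recursion (Ω : Type*) [MeasurableSpace Ω]
    (P : Measure Ω) [IsProbabilityMeasure P]
    (H : Type*) [NormedAddCommGroup H] [InnerProductSpace ℝ H] [CompleteSpace H]
    (X Y : Ω → H)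
    (hX : AEStronglyMeasurable X P) (hY : AEStronglyMeasurable Y P)
    (hX2 : Integrable (fun ω => ‖X ω‖ ^ 2) P)
    (hY2 : Integrable (fun ω => ‖Y ω‖ ^ 2) P)
    (u : H) (a σ C D : ℝ) (ha0 : 0 ≤ a) (ha1 : a ≤ 1)
    (hσ : 0 ≤ σ) (hC : 0 ≤ C) (hD : 0 ≤ D)
    (hvar : ∫ ω, ‖X ω - ∫ ω', X ω' ∂P‖ ^ 2 ∂P ≤ σ ^ 2)
    (hXY : ∫ ω, ‖X ω - Y ω‖ ^ 2 ∂P ≤ C ^ 2 * D ^ 2) :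
    ∫ ω, ‖X ω + (1 - a) • (u - Y ω) - ∫ ω', X ω' ∂P‖ ^ 2 ∂P
      ≤ 2 * a ^ 2 * σ ^ 2 + (1 - a) ^ 2 * ‖u - ∫ ω', Y ω' ∂P‖ ^ 2
        + 2 * (1 - a) ^ 2 * C ^ 2 * D ^ 2 :=
  storm_variance_recursion_general Ω P H X Y hX hY hX2 hY2 u a σ C D hvar hXY
end
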